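/- For every natural number n and every p ∈ [0,1], T_{n+1}(p) ≤ 2·T_n(p)^2. -/

import Mathlib

open Set Filter Topology

noncomputable section

/-- The dyadic tile `[a/2^i, (a+1)/2^i] × [b/2^j, (b+1)/2^j]` as a subset of `ℝ × ℝ`. -/
def dyadicTile (i j a b : ℕ) : Set (ℝ × ℝ) :=
  Set.Icc ((a : ℝ) / 2 ^ i) (((a : ℝ) + 1) / 2 ^ i) ×ˢ
    Set.Icc ((b : ℝ) / 2 ^ j) (((b : ℝ) + 1) / 2 ^ j)

/-- `t` is a dyadic tile of order `n` contained in the unit square. -/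
def IsDyadicTile (n : ℕ) (t : Set (ℝ × ℝ)) : Prop :=
  ∃ i j a b : ℕ, i + j = n ∧ a < 2 ^ i ∧ b < 2 ^ j ∧ t = dyadicTile i j a b

/-- `F` is a tiling of the region `R` by dyadic tiles of order `n`:
a set of order-`n` tiles whose union is `R` and whose interiors are pairwise disjoint. -/
def IsTiling (n : ℕ) (F : Set (Set (ℝ × ℝ))) (R : Set (ℝ × ℝ)) : Prop :=
  (∀ t ∈ F, IsDyadicTile n t) ∧ ⋃₀ F = R ∧
    F.Pairwise fun s t => interior s ∩ interior t = ∅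

def unitSquare : Set (ℝ × ℝ) := Set.Icc (0 : ℝ) 1 ×ˢ Set.Icc (0 : ℝ) 1

/-- Index type for the dyadic tiles of order `n`: a shape `i` (width `2^{-i}`, height
`2^{-(n-i)}`) together with the horizontal and vertical positions. -/
abbrev TileIndex (n : ℕ) : Type :=
  Σ i : Fin (n + 1), Fin (2 ^ (i : ℕ)) × Fin (2 ^ (n - (i : ℕ)))

/-- The order-`n` tile corresponding to an index. -/
def tileOf (n : ℕ) (x : TileIndex n) : Set (ℝ × ℝ) :=
  dyadicTile (x.1 : ℕ) (n - (x.1 : ℕ)) (x.2.1 : ℕ) (x.2.2 : ℕ)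

/-- The set `S` of available order-`n` tiles admits a tiling of the unit square. -/
def TileableSquare (n : ℕ) (S : Finset (TileIndex n)) : Prop :=
  ∃ F : Set (Set (ℝ × ℝ)), (∀ t ∈ F, ∃ x ∈ S, t = tileOf n x) ∧ IsTiling n F unitSquare

open Classical in
/-- Probability of the event `E` when each of the `(n+1)·2^n` order-`n` dyadic tiles is
available independently with probability `p`. -/
def Pr (n : ℕ) (p : ℝ) (E : Finset (TileIndex n) → Prop) : ℝ :=
  ∑ S : Finset (TileIndex n),
    if E S then p ^ S.card * (1 - p) ^ ((n + 1) * 2 ^ n - S.card) else 0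

/-- `T n p`: the probability that some set of available order-`n` tiles tiles `[0,1]²`. -/
def T (n : ℕ) (p : ℝ) : ℝ := Pr n p (TileableSquare n)

/-- The critical probability `p_c`. -/
def pc : ℝ :=
  sInf {p : ℝ | p ∈ Set.Icc (0 : ℝ) 1 ∧ Tendsto (fun n => T n p) atTop (𝓝 1)}

/-!
In a tiling of the square by order-`(n+1)` tiles, a full-width tile `1 × 2^{-(n+1)}` and a
full-height tile `2^{-(n+1)} × 1` would overlap, so one of the two shapes is absent. If no tile
has full width, every tile lies in the left or the right half of the square, and stretching each
half horizontally by `2` turns its tiles into an order-`n` tiling of the square. The indices of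
tiles lying in the two halves are disjoint, so the two stretched events are independent and each
has probability `T_n`. The full-height case is the transpose of this one, and the union bound
gives `T_{n+1} ≤ 2 T_n²`.
-/

section BernoulliSubset

open Finset Function

variable {α β γ : Type*} [Fintype α] [Fintype β] [Fintype γ]

open Classical in
def bernoulliProb (p : ℝ) (E : Finset α → Prop) : ℝ :=
  ∑ S : Finset α, if E S then p ^ #S * (1 - p) ^ (Fintype.card α - #S) else 0

theorem bernoulliProb_true (p : ℝ) : bernoulliProb p (fun _ : Finset α => True) = 1 := by
  simp [bernoulliProb, Fintype.sum_pow_mul_eq_add_pow]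

theorem bernoulliProb_le_add {p : ℝ} (hp0 : 0 ≤ p) (hp1 : p ≤ 1) {E A B : Finset α → Prop}
    (h : ∀ S, E S → A S ∨ B S) : bernoulliProb p E ≤ bernoulliProb p A + bernoulliProb p B := by
  rw [bernoulliProb, bernoulliProb, bernoulliProb, ← sum_add_distrib]
  refine sum_le_sum fun S _ => ?_
  have hw : 0 ≤ p ^ #S * (1 - p) ^ (Fintype.card α - #S) := by
    have : 0 ≤ 1 - p := by linarith
    positivity
  have := h S
  split_ifs <;> simp_all

theorem bernoulliProb_map_equiv (p : ℝ) (e : α ≃ β) (E : Finset β → Prop) :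
    bernoulliProb p (fun S => E (S.map e.toEmbedding)) = bernoulliProb p E := by
  rw [bernoulliProb, bernoulliProb, Fintype.card_congr e]
  refine Fintype.sum_equiv e.finsetCongr _ _ fun S => ?_
  simp only [Equiv.finsetCongr_apply, card_map]
  congr

theorem bernoulliProb_toLeft_and_toRight (p : ℝ) (P : Finset α → Prop) (Q : Finset γ → Prop) :
    bernoulliProb p (fun S : Finset (α ⊕ γ) => P S.toLeft ∧ Q S.toRight) =
      bernoulliProb p P * bernoulliProb p Q := by
  rw [bernoulliProb, bernoulliProb, bernoulliProb, sum_mul_sum, ← Fintype.sum_prod_type']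
  symm
  refine Fintype.sum_equiv Finset.sumEquiv.symm.toEquiv _ _ fun ⟨A, C⟩ => ?_
  rw [show Finset.sumEquiv.symm.toEquiv (A, C) = A.disjSum C from rfl]
  have hA : #A ≤ Fintype.card α := card_le_univ A
  have hC : #C ≤ Fintype.card γ := card_le_univ C
  have hexp : Fintype.card (α ⊕ γ) - (#A + #C) =
      (Fintype.card α - #A) + (Fintype.card γ - #C) := by
    rw [Fintype.card_sum]; omega
  simp only [toLeft_disjSum, toRight_disjSum, card_disjSum, hexp, pow_add]
  split_ifs <;> simp_all; ring

theorem bernoulliProb_preimage (p : ℝ) {f : α → β} (hf : Injective f) (E : Finset α → Prop) :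
    bernoulliProb p (fun S => E (S.preimage f hf.injOn)) = bernoulliProb p E := by
  classical
  let e : α ⊕ ↥(Set.range f)ᶜ ≃ β :=
    ((Equiv.ofInjective f hf).sumCongr (Equiv.refl _)).trans (Equiv.Set.sumCompl _)
  have hpre : ∀ S : Finset (α ⊕ ↥(Set.range f)ᶜ),
      (S.map e.toEmbedding).preimage f hf.injOn = S.toLeft := by
    intro S
    ext a
    simp [e, hf.eq_iff]
  rw [← bernoulliProb_map_equiv p e]
  simp only [hpre]
  simpa [bernoulliProb_true] using bernoulliProb_toLeft_and_toRight p E (fun _ => True)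

theorem bernoulliProb_preimage_and_preimage (p : ℝ) {f : α → β} {g : γ → β} (hf : Injective f)
    (hg : Injective g) (hfg : ∀ a c, f a ≠ g c) (P : Finset α → Prop) (Q : Finset γ → Prop) :
    bernoulliProb p (fun S => P (S.preimage f hf.injOn) ∧ Q (S.preimage g hg.injOn)) =
      bernoulliProb p P * bernoulliProb p Q := by
  have he := hf.sumElim hg hfg
  have hl : ∀ S : Finset β, (S.preimage _ he.injOn).toLeft = S.preimage f hf.injOn := by
    intro S; ext; simp
  have hr : ∀ S : Finset β, (S.preimage _ he.injOn).toRight = S.preimage g hg.injOn := by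
    intro S; ext; simp
  rw [← bernoulliProb_toLeft_and_toRight, ← bernoulliProb_preimage p he]
  simp only [hl, hr]

end BernoulliSubset

def dyadicInterval (i a : ℕ) : Set ℝ := Icc ((a : ℝ) / 2 ^ i) (((a : ℝ) + 1) / 2 ^ i)

theorem dyadicTile_eq_prod (i j a b : ℕ) :
    dyadicTile i j a b = dyadicInterval i a ×ˢ dyadicInterval j b := rfl

theorem dyadicInterval_left_le_right (i a : ℕ) : (a : ℝ) / 2 ^ i ≤ ((a : ℝ) + 1) / 2 ^ i := by
  gcongr; linarith

theorem dyadicInterval_nonempty (i a : ℕ) : (dyadicInterval i a).Nonempty :=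
  nonempty_Icc.2 (dyadicInterval_left_le_right i a)

theorem isClosed_dyadicInterval (i a : ℕ) : IsClosed (dyadicInterval i a) := isClosed_Icc

theorem dyadicInterval_zero : dyadicInterval 0 0 = Icc 0 1 := by
  norm_num [dyadicInterval]

theorem dyadicInterval_subset_unitInterval {i a : ℕ} (ha : a < 2 ^ i) :
    dyadicInterval i a ⊆ Icc 0 1 := by
  have : (a : ℝ) + 1 ≤ 2 ^ i := by exact_mod_cast ha
  exact Icc_subset_Icc (by positivity) ((div_le_one (by positivity)).2 this)

theorem injective2_dyadicInterval : Function.Injective2 dyadicInterval := by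
  intro i i' a a' h
  obtain ⟨h₁, h₂⟩ := (Icc_eq_Icc_iff (dyadicInterval_left_le_right i a)).1 h
  have hpow : (2 : ℝ) ^ i = 2 ^ i' := by
    have : 1 / (2 : ℝ) ^ i = 1 / 2 ^ i' := by linear_combination h₂ - h₁
    simpa using this
  have hi : i = i' := Nat.pow_right_injective le_rfl (by exact_mod_cast hpow)
  subst hi
  refine ⟨rfl, ?_⟩
  exact_mod_cast (div_left_inj' (by positivity)).1 h₁

theorem mid_mem_interior_dyadicInterval (i a : ℕ) :
    ((a : ℝ) + 2⁻¹) / 2 ^ i ∈ interior (dyadicInterval i a) := by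
  rw [dyadicInterval, interior_Icc]
  constructor <;> gcongr <;> norm_num

theorem closure_interior_dyadicInterval (i a : ℕ) :
    closure (interior (dyadicInterval i a)) = dyadicInterval i a :=
  closure_interior_Icc (div_lt_div_of_pos_right (lt_add_one _) (by positivity)).ne

theorem eq_of_mem_interior_dyadicInterval {i a a' : ℕ} {x : ℝ}
    (hx : x ∈ interior (dyadicInterval i a)) (hx' : x ∈ dyadicInterval i a') : a = a' := by
  rw [dyadicInterval, interior_Icc] at hx
  have hlt : ∀ c d : ℕ, (c : ℝ) / 2 ^ i < (d + 1) / 2 ^ i → c < d + 1 := fun c d h => by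
    exact_mod_cast (div_lt_div_iff_of_pos_right (by positivity)).1 h
  have := hlt a a' (hx.1.trans_le hx'.2)
  have := hlt a' a (hx'.1.trans_lt hx.2)
  omega

theorem image_dyadicInterval_succ (k i a : ℕ) :
    (fun x : ℝ => 2 * x + -k) '' dyadicInterval (i + 1) (k * 2 ^ i + a) = dyadicInterval i a := by
  rw [dyadicInterval, image_affine_Icc' two_pos, dyadicInterval]
  congr 1 <;> (push_cast; field_simp; ring)

theorem dyadicTile_zero : dyadicTile 0 0 0 0 = unitSquare := by
  rw [dyadicTile_eq_prod, dyadicInterval_zero, unitSquare]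

theorem isClosed_dyadicTile (i j a b : ℕ) : IsClosed (dyadicTile i j a b) :=
  (isClosed_dyadicInterval i a).prod (isClosed_dyadicInterval j b)

theorem dyadicTile_subset_unitSquare {i j a b : ℕ} (ha : a < 2 ^ i) (hb : b < 2 ^ j) :
    dyadicTile i j a b ⊆ unitSquare :=
  prod_mono (dyadicInterval_subset_unitInterval ha) (dyadicInterval_subset_unitInterval hb)

theorem image_swap_dyadicTile (i j a b : ℕ) :
    Prod.swap '' dyadicTile i j a b = dyadicTile j i b a :=
  image_swap_prod _ _

theorem interior_dyadicTile_inter_nonempty {m a b : ℕ} (ha : a < 2 ^ m) (hb : b < 2 ^ m) :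
    (interior (dyadicTile 0 m 0 b) ∩ interior (dyadicTile m 0 a 0)).Nonempty := by
  have hmid : ∀ c : ℕ, c < 2 ^ m → ((c : ℝ) + 2⁻¹) / 2 ^ m ∈ interior (dyadicInterval 0 0) :=
    fun c hc => interior_mono
      (by simpa [dyadicInterval_zero] using dyadicInterval_subset_unitInterval hc)
      (mid_mem_interior_dyadicInterval m c)
  refine ⟨(((a : ℝ) + 2⁻¹) / 2 ^ m, ((b : ℝ) + 2⁻¹) / 2 ^ m), ?_, ?_⟩ <;>
    rw [dyadicTile_eq_prod, interior_prod_eq]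
  · exact ⟨hmid a ha, mid_mem_interior_dyadicInterval m b⟩
  · exact ⟨mid_mem_interior_dyadicInterval m a, hmid b hb⟩

def halfStretch (k : ℕ) : (ℝ × ℝ) ≃ₜ (ℝ × ℝ) :=
  ((Homeomorph.mulLeft₀ 2 two_ne_zero).trans (Homeomorph.addRight (-(k : ℝ)))).prodCongr
    (Homeomorph.refl ℝ)

theorem halfStretch_image_dyadicTile (k i j a b : ℕ) :
    halfStretch k '' dyadicTile (i + 1) j (k * 2 ^ i + a) b = dyadicTile i j a b := by
  change Prod.map (fun x : ℝ => 2 * x + -k) id '' _ = _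
  rw [dyadicTile_eq_prod, prodMap_image_prod, image_id, image_dyadicInterval_succ]
  rfl

theorem halfStretch_image_half (k : ℕ) : halfStretch k '' dyadicTile 1 0 k 0 = unitSquare := by
  simpa [dyadicTile_zero] using halfStretch_image_dyadicTile k 0 0 0 0

namespace TileIndex

variable {n : ℕ}

theorem ext_val {x y : TileIndex n} (h₁ : (x.1 : ℕ) = y.1) (h₂ : (x.2.1 : ℕ) = y.2.1)
    (h₃ : (x.2.2 : ℕ) = y.2.2) : x = y := by
  obtain ⟨⟨i, hi⟩, ⟨a, ha⟩, ⟨b, hb⟩⟩ := x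
  obtain ⟨⟨i', hi'⟩, ⟨a', ha'⟩, ⟨b', hb'⟩⟩ := y
  simp only at h₁ h₂ h₃
  subst h₁ h₂ h₃
  rfl

theorem isDyadicTile_tileOf (x : TileIndex n) : IsDyadicTile n (tileOf n x) :=
  ⟨x.1, n - x.1, x.2.1, x.2.2, by have := x.1.isLt; omega, x.2.1.isLt, x.2.2.isLt, rfl⟩

theorem tileOf_subset_unitSquare (x : TileIndex n) : tileOf n x ⊆ unitSquare :=
  dyadicTile_subset_unitSquare x.2.1.isLt x.2.2.isLt

theorem tileOf_injective : Function.Injective (tileOf n) := by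
  intro x y h
  rw [tileOf, tileOf, dyadicTile_eq_prod, dyadicTile_eq_prod,
    prod_eq_prod_iff_of_nonempty ((dyadicInterval_nonempty _ _).prod (dyadicInterval_nonempty _ _))]
    at h
  obtain ⟨⟨hi, ha⟩, -, hb⟩ := h.imp (injective2_dyadicInterval ·) (injective2_dyadicInterval ·)
  exact ext_val hi ha hb

def transpose (x : TileIndex n) : TileIndex n :=
  ⟨x.1.rev, ⟨x.2.2, by simp [Fin.val_rev]⟩,
    ⟨x.2.1, by have := x.1.isLt; simp [Fin.val_rev, show n - (n - x.1) = x.1 by omega]⟩⟩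

theorem transpose_transpose (x : TileIndex n) : x.transpose.transpose = x :=
  ext_val (by simp [transpose]) rfl rfl

theorem tileOf_transpose (x : TileIndex n) : tileOf n x.transpose = Prod.swap '' tileOf n x := by
  rw [tileOf, tileOf, image_swap_dyadicTile]
  have := x.1.isLt
  simp only [transpose, Fin.val_rev]
  congr 1 <;> omega

theorem interior_tileOf_inter_nonempty {x y : TileIndex n} (hx : x.1 = 0) (hy : y.1 = Fin.last n) :
    (interior (tileOf n x) ∩ interior (tileOf n y)).Nonempty := by
  obtain ⟨⟨i, hi⟩, ⟨a, ha⟩, ⟨b, hb⟩⟩ := x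
  obtain ⟨⟨i', hi'⟩, ⟨a', ha'⟩, ⟨b', hb'⟩⟩ := y
  simp only [Fin.ext_iff, Fin.val_zero, Fin.val_last] at hx hy
  subst hx hy
  obtain rfl : a = 0 := by simpa using ha
  obtain rfl : b' = 0 := by simpa using hb'
  simpa [tileOf] using interior_dyadicTile_inter_nonempty ha' hb

def transposeEquiv : TileIndex n ≃ TileIndex n :=
  Function.Involutive.toPerm transpose transpose_transpose

def toHalf (k : Fin 2) (y : TileIndex n) : TileIndex (n + 1) :=
  ⟨y.1.succ,
    ⟨k * 2 ^ (y.1 : ℕ) + y.2.1, by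
      have := k.isLt; have := y.2.1.isLt
      rw [Fin.val_succ, pow_succ]; nlinarith⟩,
    ⟨y.2.2, by simp⟩⟩

theorem halfStretch_image_tileOf_toHalf (k : Fin 2) (y : TileIndex n) :
    halfStretch k '' tileOf (n + 1) (toHalf k y) = tileOf n y := by
  change halfStretch k '' dyadicTile ((y.1 : ℕ) + 1) (n + 1 - ((y.1 : ℕ) + 1))
    (k * 2 ^ (y.1 : ℕ) + y.2.1) y.2.2 = _
  rw [Nat.add_sub_add_right]
  exact halfStretch_image_dyadicTile k _ _ _ _

theorem tileOf_toHalf_subset (k : Fin 2) (y : TileIndex n) :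
    tileOf (n + 1) (toHalf k y) ⊆ dyadicTile 1 0 k 0 := by
  rw [← image_subset_image_iff (halfStretch k).injective, halfStretch_image_tileOf_toHalf,
    halfStretch_image_half]
  exact tileOf_subset_unitSquare y

theorem injective2_toHalf : Function.Injective2 (toHalf (n := n)) := by
  rintro ⟨k, hk⟩ ⟨k', hk'⟩ ⟨⟨i, hi⟩, ⟨a, ha⟩, ⟨b, hb⟩⟩ ⟨⟨i', hi'⟩, ⟨a', ha'⟩, ⟨b', hb'⟩⟩ h
  have h₁ := congrArg (fun x => (x.1 : ℕ)) h
  have h₂ := congrArg (fun x => (x.2.1 : ℕ)) h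
  have h₃ := congrArg (fun x => (x.2.2 : ℕ)) h
  simp only [toHalf, Fin.val_succ, add_left_inj] at h₁ h₂ h₃
  subst h₁ h₃
  have hdiv : ∀ c d, c < 2 ^ i → (d * 2 ^ i + c) / 2 ^ i = d := fun c d hc => by
    rw [add_comm, Nat.add_mul_div_right _ _ (Nat.two_pow_pos i), Nat.div_eq_of_lt hc, zero_add]
  have hkk : k = k' := by rw [← hdiv a k ha, ← hdiv a' k' ha', h₂]
  subst hkk
  exact ⟨rfl, ext_val rfl (by simpa using h₂) rfl⟩

theorem exists_toHalf_eq (x : TileIndex (n + 1)) (hx : x.1 ≠ 0) : ∃ k y, toHalf k y = x := by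
  obtain ⟨⟨_ | i, hi⟩, ⟨a, ha⟩, ⟨b, hb⟩⟩ := x
  · exact absurd rfl hx
  have ha' : a < 2 ^ i * 2 := by rwa [pow_succ] at ha
  refine ⟨⟨a / 2 ^ i, Nat.div_lt_of_lt_mul ha'⟩,
    ⟨⟨i, by omega⟩, ⟨a % 2 ^ i, Nat.mod_lt _ (Nat.two_pow_pos _)⟩, ⟨b, by simpa using hb⟩⟩, ?_⟩
  exact ext_val rfl (Nat.div_add_mod' a (2 ^ i)) rfl

end TileIndex

open TileIndex

theorem IsTiling.image {m m' : ℕ} {F : Set (Set (ℝ × ℝ))} {R : Set (ℝ × ℝ)}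
    (hT : IsTiling m F R) (e : (ℝ × ℝ) ≃ₜ (ℝ × ℝ)) (he : ∀ t ∈ F, IsDyadicTile m' (e '' t)) :
    IsTiling m' ((e '' ·) '' F) (e '' R) := by
  refine ⟨?_, ?_, ?_⟩
  · rintro _ ⟨t, ht, rfl⟩
    exact he t ht
  · rw [sUnion_image, ← image_iUnion₂, ← sUnion_eq_biUnion, hT.2.1]
  · rintro _ ⟨s, hs, rfl⟩ _ ⟨t, ht, rfl⟩ hst
    rw [← e.image_interior, ← e.image_interior, ← image_inter e.injective,
      hT.2.2 hs ht (ne_of_apply_ne _ hst), image_empty]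

def TileableSquareAvoiding (m : ℕ) (S : Finset (TileIndex m)) (i : Fin (m + 1)) : Prop :=
  ∃ F : Set (Set (ℝ × ℝ)), (∀ t ∈ F, ∃ x ∈ S, x.1 ≠ i ∧ t = tileOf m x) ∧ IsTiling m F unitSquare

theorem TileableSquare.avoiding_zero_or_last {m : ℕ} {S : Finset (TileIndex m)} (hm : m ≠ 0)
    (h : TileableSquare m S) :
    TileableSquareAvoiding m S 0 ∨ TileableSquareAvoiding m S (Fin.last m) := by
  obtain ⟨F, hF, hT⟩ := h
  by_cases hwide : ∃ x₀ ∈ S, x₀.1 = 0 ∧ tileOf m x₀ ∈ F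
  · obtain ⟨x₀, -, hx₀, hx₀F⟩ := hwide
    refine Or.inr ⟨F, fun t ht => ?_, hT⟩
    obtain ⟨x, hxS, rfl⟩ := hF t ht
    refine ⟨x, hxS, fun hx => ?_, rfl⟩
    have hne : x₀ ≠ x := fun h => by simp [h, hx, Fin.ext_iff, hm] at hx₀
    have hdisj := hT.2.2 hx₀F ht (tileOf_injective.ne hne)
    exact (interior_tileOf_inter_nonempty hx₀ hx).ne_empty hdisj
  · exact Or.inl ⟨F, fun t ht => by
      obtain ⟨x, hxS, rfl⟩ := hF t ht
      exact ⟨x, hxS, fun hx => hwide ⟨x, hxS, hx, ht⟩, rfl⟩, hT⟩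

theorem TileableSquareAvoiding.transpose {m : ℕ} {S : Finset (TileIndex m)} {i : Fin (m + 1)}
    (h : TileableSquareAvoiding m S i) :
    TileableSquareAvoiding m (S.map transposeEquiv.toEmbedding) i.rev := by
  obtain ⟨F, hF, hT⟩ := h
  have hswap : ∀ t ∈ F, ∃ x ∈ S, x.1 ≠ i ∧
      Homeomorph.prodComm ℝ ℝ '' t = tileOf m x.transpose := by
    intro t ht
    obtain ⟨x, hxS, hx, rfl⟩ := hF t ht
    exact ⟨x, hxS, hx, by rw [Homeomorph.coe_prodComm, tileOf_transpose]⟩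
  refine ⟨(Homeomorph.prodComm ℝ ℝ '' ·) '' F, ?_, ?_⟩
  · rintro _ ⟨t, ht, rfl⟩
    obtain ⟨x, hxS, hx, heq⟩ := hswap t ht
    exact ⟨x.transpose, Finset.mem_map_of_mem _ hxS, Fin.rev_injective.ne hx, heq⟩
  · have := hT.image (Homeomorph.prodComm ℝ ℝ) fun t ht => by
      obtain ⟨x, -, -, heq⟩ := hswap t ht
      exact heq ▸ isDyadicTile_tileOf _
    rwa [Homeomorph.coe_prodComm, unitSquare, image_swap_prod] at this

theorem sUnion_tileOf_toHalf_eq_half {n : ℕ} {F : Set (Set (ℝ × ℝ))}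
    (hT : IsTiling (n + 1) F unitSquare)
    (hcover : ∀ t ∈ F, ∃ k y, t = tileOf (n + 1) (toHalf k y)) (k : Fin 2) :
    ⋃₀ {t ∈ F | ∃ y, t = tileOf (n + 1) (toHalf k y)} = dyadicTile 1 0 k 0 := by
  refine subset_antisymm (sUnion_subset fun t ⟨_, y, ht⟩ => ht ▸ tileOf_toHalf_subset k y) ?_
  have hclosed : IsClosed (⋃₀ {t ∈ F | ∃ y, t = tileOf (n + 1) (toHalf k y)}) := by
    rw [sUnion_eq_biUnion]
    refine ((finite_range fun y => tileOf (n + 1) (toHalf k y)).subset ?_).isClosed_biUnion ?_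
    · rintro t ⟨-, y, rfl⟩
      exact ⟨y, rfl⟩
    · rintro t ⟨-, y, rfl⟩
      exact isClosed_dyadicTile _ _ _ _
  -- A point off the midline lies only in tiles of its own half; such points are dense.
  have hstrip :
      closure (interior (dyadicInterval 1 k) ×ˢ dyadicInterval 0 0) = dyadicTile 1 0 k 0 := by
    rw [closure_prod_eq, closure_interior_dyadicInterval,
      (isClosed_dyadicInterval 0 0).closure_eq]
    rfl
  rw [← hstrip]
  refine closure_minimal (fun z hz => ?_) hclosed
  have hz' : z ∈ ⋃₀ F := by
    rw [hT.2.1]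
    exact dyadicTile_subset_unitSquare (by simp [k.isLt]) (by simp)
      (prod_mono interior_subset le_rfl hz)
  obtain ⟨t, htF, hzt⟩ := hz'
  obtain ⟨k', y, rfl⟩ := hcover t htF
  obtain rfl : k = k' :=
    Fin.ext (eq_of_mem_interior_dyadicInterval hz.1 (tileOf_toHalf_subset k' y hzt).1)
  exact ⟨_, ⟨htF, y, rfl⟩, hzt⟩

theorem TileableSquareAvoiding.tileableSquare_preimage_toHalf {n : ℕ}
    {S : Finset (TileIndex (n + 1))} (h : TileableSquareAvoiding (n + 1) S 0) (k : Fin 2) :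
    TileableSquare n (S.preimage (toHalf k) (injective2_toHalf.right k).injOn) := by
  obtain ⟨F, hF, hT⟩ := h
  have hcover : ∀ t ∈ F, ∃ k y, t = tileOf (n + 1) (toHalf k y) := by
    intro t ht
    obtain ⟨x, -, hx, rfl⟩ := hF t ht
    obtain ⟨k, y, rfl⟩ := exists_toHalf_eq x hx
    exact ⟨k, y, rfl⟩
  set Fk := {t ∈ F | ∃ y, t = tileOf (n + 1) (toHalf k y)}
  have hTk : IsTiling (n + 1) Fk (dyadicTile 1 0 k 0) :=
    ⟨fun t ht => hT.1 t ht.1, sUnion_tileOf_toHalf_eq_half hT hcover k,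
      hT.2.2.mono (sep_subset _ _)⟩
  refine ⟨(halfStretch k '' ·) '' Fk, ?_, ?_⟩
  · rintro _ ⟨_, ⟨htF, y, rfl⟩, rfl⟩
    obtain ⟨x, hxS, -, hx⟩ := hF _ htF
    refine ⟨y, Finset.mem_preimage.2 ?_, halfStretch_image_tileOf_toHalf k y⟩
    rwa [tileOf_injective hx]
  · rw [← halfStretch_image_half k]
    refine hTk.image _ fun t ⟨_, y, ht⟩ => ?_
    rw [ht, halfStretch_image_tileOf_toHalf]
    exact isDyadicTile_tileOf y

def BothHalvesTileable (n : ℕ) (S : Finset (TileIndex (n + 1))) : Prop :=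
  TileableSquare n (S.preimage (toHalf 0) (injective2_toHalf.right 0).injOn) ∧
    TileableSquare n (S.preimage (toHalf 1) (injective2_toHalf.right 1).injOn)

theorem TileableSquare.bothHalvesTileable_or {n : ℕ} {S : Finset (TileIndex (n + 1))}
    (h : TileableSquare (n + 1) S) :
    BothHalvesTileable n S ∨ BothHalvesTileable n (S.map transposeEquiv.toEmbedding) := by
  rcases h.avoiding_zero_or_last n.succ_ne_zero with h₀ | hlast
  · exact Or.inl ⟨h₀.tileableSquare_preimage_toHalf 0, h₀.tileableSquare_preimage_toHalf 1⟩
  · have h₀ := hlast.transpose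
    rw [Fin.rev_last] at h₀
    exact Or.inr ⟨h₀.tileableSquare_preimage_toHalf 0, h₀.tileableSquare_preimage_toHalf 1⟩

theorem card_tileIndex (n : ℕ) : Fintype.card (TileIndex n) = (n + 1) * 2 ^ n := by
  rw [Fintype.card_sigma]
  have (i : Fin (n + 1)) : Fintype.card (Fin (2 ^ (i : ℕ)) × Fin (2 ^ (n - i))) = 2 ^ n := by
    rw [Fintype.card_prod, Fintype.card_fin, Fintype.card_fin, ← pow_add]
    congr 1
    omega
  simp [this]

theorem Pr_eq_bernoulliProb (n : ℕ) (p : ℝ) (E : Finset (TileIndex n) → Prop) :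
    Pr n p E = bernoulliProb p E := by
  rw [Pr, bernoulliProb, card_tileIndex]

theorem bernoulliProb_bothHalvesTileable (n : ℕ) (p : ℝ) :
    bernoulliProb p (BothHalvesTileable n) = T n p ^ 2 := by
  have hdisj : ∀ y y' : TileIndex n, toHalf 0 y ≠ toHalf 1 y' :=
    fun y y' h => absurd (injective2_toHalf h).1 (by decide)
  rw [T, Pr_eq_bernoulliProb, sq]
  exact bernoulliProb_preimage_and_preimage p (injective2_toHalf.right 0)
    (injective2_toHalf.right 1) hdisj _ _

/-- `T_{n+1}(p) ≤ 2 T_n(p)²`. -/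
theorem T_succ_le (n : ℕ) (p : ℝ) (hp : p ∈ Set.Icc (0 : ℝ) 1) :
    T (n + 1) p ≤ 2 * T n p ^ 2 := by
  calc T (n + 1) p = bernoulliProb p (TileableSquare (n + 1)) := Pr_eq_bernoulliProb _ _ _
    _ ≤ bernoulliProb p (BothHalvesTileable n) +
          bernoulliProb p fun S => BothHalvesTileable n (S.map transposeEquiv.toEmbedding) :=
      bernoulliProb_le_add hp.1 hp.2 fun _ hS => hS.bothHalvesTileable_or
    _ = 2 * T n p ^ 2 := by
      rw [bernoulliProb_map_equiv, bernoulliProb_bothHalvesTileable]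
      ring
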